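/- arXiv:1809.08000 — 3 statements merged into one kernel-verified Lean document; each statement's English description precedes it below -/
import Mathlib

section
/- Fix an integer p ≥ 2. If 0 ≤ α ≤ (p−1)/2, then h̄(α) = h(α); if (p−1)/2 ≤ α ≤ p−1, then h̲(α) = h(α). -/
open Filter MeasureTheory Set
open scoped ENNReal

noncomputable section

/-- Number of words of length `n` over the alphabet `{0, …, p-1}` whose digit sum lies
strictly between `n(α-δ)` and `n(α+δ)`; this is `h(α,n,δ)`. -/
def hcount (p n : ℕ) (α δ : ℝ) : ℕ :=
  Nat.card {w : Fin n → Fin p //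
    (n : ℝ) * (α - δ) < ∑ i, ((w i : ℕ) : ℝ) ∧ (∑ i, ((w i : ℕ) : ℝ)) < n * (α + δ)}

/-- The `p`-adic entropy function
`h(α) = lim_{δ→0} limsup_{n→∞} log h(α,n,δ) / (n log p)`.
Since the inner quantity is nondecreasing in `δ`, the limit as `δ → 0⁺` equals the
infimum over `δ > 0`. -/
def entropy (p : ℕ) (α : ℝ) : ℝ :=
  ⨅ δ : {δ : ℝ // 0 < δ},
    limsup (fun n : ℕ => Real.log (hcount p n α δ) / (n * Real.log p)) atTop

/-- Number of words of length `n` over `{0, …, p-1}` with digit sum `< n(α+δ)`;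
this is `h̄(α,n,δ)`. -/
def hbarCount (p n : ℕ) (α δ : ℝ) : ℕ :=
  Nat.card {w : Fin n → Fin p // (∑ i, ((w i : ℕ) : ℝ)) < n * (α + δ)}

/-- The `p`-adic upper entropy function
`h̄(α) = lim_{δ→0} limsup_{n→∞} log h̄(α,n,δ) / (n log p)`, the limit in `δ`
being the infimum over `δ > 0` by monotonicity in `δ`. -/
def upperEntropy (p : ℕ) (α : ℝ) : ℝ :=
  ⨅ δ : {δ : ℝ // 0 < δ},
    limsup (fun n : ℕ => Real.log (hbarCount p n α δ) / (n * Real.log p)) atTop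

/-- Number of words of length `n` over `{0, …, p-1}` with digit sum `> n(α-δ)`;
this is `h̲(α,n,δ)`. -/
def hlowCount (p n : ℕ) (α δ : ℝ) : ℕ :=
  Nat.card {w : Fin n → Fin p // (n : ℝ) * (α - δ) < ∑ i, ((w i : ℕ) : ℝ)}

/-- The `p`-adic lower entropy function
`h̲(α) = lim_{δ→0} liminf_{n→∞} log h̲(α,n,δ) / (n log p)`, the limit in `δ`
being the infimum over `δ > 0` by monotonicity in `δ`. -/
def lowerEntropy (p : ℕ) (α : ℝ) : ℝ :=
  ⨅ δ : {δ : ℝ // 0 < δ},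
    liminf (fun n : ℕ => Real.log (hlowCount p n α δ) / (n * Real.log p)) atTop

/-- The `(n+1)`-th digit `x_{n+1} ∈ {0,…,p-1}` of the non-terminating `p`-adic expansion
`x = 0.x₁x₂x₃…` of `x ∈ [0,1]` (the expansion not ending in all zeros). -/
def padicDigit (p : ℕ) (x : ℝ) (n : ℕ) : ℤ :=
  (⌈x * p ^ (n + 1)⌉ - 1) - p * (⌈x * p ^ n⌉ - 1)

/-- `S_n(T^m x) = x_{m+1} + ⋯ + x_{m+n}`, the digit sum of length `n` after shifting
`m` times. In particular `msum p x 0 n = S_n(x)`. -/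
def msum (p : ℕ) (x : ℝ) (m n : ℕ) : ℤ :=
  ∑ i ∈ Finset.range n, padicDigit p x (m + i)

/-- The `n`-th lower moving digit mean `M̲ₙ(x) = liminf_{m→∞} S_n(T^m x)/n`. -/
def lowerMn (p : ℕ) (x : ℝ) (n : ℕ) : ℝ :=
  liminf (fun m : ℕ => (msum p x m n : ℝ) / n) atTop

/-- The `n`-th upper moving digit mean `M̄ₙ(x) = limsup_{m→∞} S_n(T^m x)/n`. -/
def upperMn (p : ℕ) (x : ℝ) (n : ℕ) : ℝ :=
  limsup (fun m : ℕ => (msum p x m n : ℝ) / n) atTop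

/-- The lower moving digit mean `M̲(x) = lim_{n→∞} M̲ₙ(x)`; the limit exists by
subadditivity, hence equals the `liminf`. -/
def lowerM (p : ℕ) (x : ℝ) : ℝ := liminf (fun n : ℕ => lowerMn p x n) atTop

/-- The upper moving digit mean `M̄(x) = lim_{n→∞} M̄ₙ(x)`; the limit exists by
subadditivity, hence equals the `limsup`. -/
def upperM (p : ℕ) (x : ℝ) : ℝ := limsup (fun n : ℕ => upperMn p x n) atTop

/-- The lower digit mean `A̲(x) = liminf_{n→∞} S_n(x)/n`. -/
def lowerA (p : ℕ) (x : ℝ) : ℝ := liminf (fun n : ℕ => (msum p x 0 n : ℝ) / n) atTop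

/-- The upper digit mean `Ā(x) = limsup_{n→∞} S_n(x)/n`. -/
def upperA (p : ℕ) (x : ℝ) : ℝ := limsup (fun n : ℕ => (msum p x 0 n : ℝ) / n) atTop

/-- The Banach set `B(α,β) = {x ∈ [0,1] : M̲(x) = α, M̄(x) = β}`. -/
def BanachSet (p : ℕ) (α β : ℝ) : Set ℝ :=
  {x | x ∈ Icc (0 : ℝ) 1 ∧ lowerM p x = α ∧ upperM p x = β}

/-!
The number of words in `A^n` with digit sum `k` is the `k`-th coefficient of
`(1 + x + ⋯ + x^{p-1})^n`, which is symmetric about `n(p-1)/2` and unimodal. So for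
`α ≤ (p-1)/2` the most frequent digit sum below `n(α+δ)` already lies in the window
`(n(α-δ), n(α+δ))`, whence `h̄(α,n,δ) ≤ (n(p-1)+1) h(α,n,δ)`: the two counts have the
same exponential growth rate. The case `α ≥ (p-1)/2` reduces to this one through the
digit reversal `x ↦ p-1-x`, which turns `h̲(α,n,δ)` into `h̄(p-1-α,n,δ)`; the `liminf`
in `h̲` is harmless because `n ↦ h̄(β,n,δ)` is supermultiplicative, so by Fekete's lemma
its growth rate is a limit.
-/

namespace DigitSum

open Finset

variable {p n : ℕ}

def digitSum (w : Fin n → Fin p) : ℕ := ∑ i, (w i : ℕ)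

def wordCount (p n : ℕ) (k : ℤ) : ℕ := #{w : Fin n → Fin p | (digitSum w : ℤ) = k}

lemma digitSum_le (w : Fin n → Fin p) : digitSum w ≤ n * (p - 1) := by
  calc digitSum w ≤ ∑ _i : Fin n, (p - 1) := sum_le_sum fun i _ => by have := (w i).2; omega
    _ = n * (p - 1) := by simp

lemma digitSum_rev_add (w : Fin n → Fin p) :
    digitSum (Fin.rev ∘ w) + digitSum w = n * (p - 1) := by
  rw [digitSum, digitSum, ← sum_add_distrib]
  calc ∑ i, ((Fin.rev (w i) : ℕ) + w i) = ∑ _i : Fin n, (p - 1) :=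
        sum_congr rfl fun i _ => by rw [Fin.val_rev]; have := (w i).2; omega
    _ = n * (p - 1) := by simp

lemma digitSum_append {m : ℕ} (a : Fin m → Fin p) (b : Fin n → Fin p) :
    digitSum (Fin.append a b) = digitSum a + digitSum b := by
  simp [digitSum, Fin.sum_univ_add]

lemma card_digitSum_rev (P : ℕ → Prop) [DecidablePred P] :
    #{w : Fin n → Fin p | P (digitSum w)} =
      #{w : Fin n → Fin p | P (n * (p - 1) - digitSum w)} := by
  refine card_equiv (Equiv.piCongrRight fun _ => Fin.revPerm) fun w => ?_
  have := digitSum_rev_add w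
  simp only [mem_filter, Finset.mem_univ, true_and]
  exact iff_of_eq (congrArg P (by change _ = _ - digitSum (Fin.rev ∘ w); omega))

lemma wordCount_zero (k : ℤ) : wordCount p 0 k = if k = 0 then 1 else 0 := by
  split_ifs with hk <;> simp [wordCount, digitSum, hk, eq_comm]

lemma wordCount_succ (k : ℤ) :
    wordCount p (n + 1) k = ∑ d ∈ range p, wordCount p n (k - d) := by
  have digitSum_cons (d : Fin p) (w : Fin n → Fin p) :
      digitSum (Fin.cons d w : Fin (n + 1) → Fin p) = d + digitSum w := by
    simp [digitSum, Fin.sum_univ_succ]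
  rw [wordCount, card_filter, ← (Fin.consEquiv fun _ => Fin p).sum_comp, Fintype.sum_prod_type,
    ← Fin.sum_univ_eq_sum_range]
  refine sum_congr rfl fun d _ => ?_
  rw [wordCount, card_filter]
  refine sum_congr rfl fun w _ => ?_
  rw [show (Fin.consEquiv fun _ => Fin p) (d, w) = Fin.cons d w from rfl, digitSum_cons]
  congr 1
  rw [eq_sub_iff_add_eq, add_comm, Nat.cast_add]

lemma wordCount_succ_add_one (k : ℤ) :
    wordCount p (n + 1) (k + 1) + wordCount p n (k + 1 - p) =
      wordCount p (n + 1) k + wordCount p n (k + 1) := by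
  rw [wordCount_succ, wordCount_succ, ← sum_range_succ (fun d : ℕ => wordCount p n (k + 1 - d)),
    sum_range_succ', add_comm]
  push_cast
  simp only [sub_zero, add_sub_add_right_eq_sub, add_comm]

lemma wordCount_symm (k : ℤ) :
    wordCount p n ((n * (p - 1) : ℕ) - k) = wordCount p n k := by
  rw [wordCount, wordCount, card_digitSum_rev fun m => (m : ℤ) = k]
  refine congrArg card (filter_congr fun w _ => ?_)
  have := digitSum_le w
  omega

theorem apply_le_apply_of_abs_le_of_symm {α : Type*} [Preorder α] {f : ℤ → α} {s : ℤ}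
    (hsymm : ∀ k, f (s - k) = f k) (hmono : MonotoneOn f (Iic (s / 2))) {j l : ℤ}
    (h : |2 * l - s| ≤ |2 * j - s|) : f j ≤ f l := by
  have fold (x : ℤ) : ∃ y, f y = f x ∧ y ≤ s / 2 ∧ |2 * x - s| = s - 2 * y := by
    rcases le_or_gt (2 * x) s with hx | hx
    · exact ⟨x, rfl, by omega, by rw [abs_of_nonpos (by omega)]; ring⟩
    · exact ⟨s - x, hsymm x, by omega, by rw [abs_of_pos (by omega)]; ring⟩
  obtain ⟨j', hj, hj's, hjabs⟩ := fold j
  obtain ⟨l', hl, hl's, hlabs⟩ := fold l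
  rw [← hj, ← hl]
  exact hmono hj's hl's (by omega)

lemma wordCount_monotoneOn : MonotoneOn (wordCount p n) (Iic ((n * (p - 1) : ℕ) / 2 : ℤ)) := by
  induction n with
  | zero =>
    refine monotoneOn_of_le_add_one ordConnected_Iic fun k _ _ hk => ?_
    simp only [zero_mul, Nat.cast_zero, Int.zero_ediv, Set.mem_Iic] at hk
    rw [wordCount_zero, if_neg (by omega)]
    exact Nat.zero_le _
  | succ n ih =>
    refine monotoneOn_of_le_add_one ordConnected_Iic fun k _ _ hk => ?_
    have hshift : wordCount p n (k + 1 - p) ≤ wordCount p n (k + 1) := by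
      refine apply_le_apply_of_abs_le_of_symm wordCount_symm ih ?_
      rw [Set.mem_Iic, add_mul, one_mul] at hk
      generalize n * (p - 1) = s at hk ⊢
      exact (abs_le.mpr ⟨by omega, by omega⟩).trans (neg_le_abs _)
    have := wordCount_succ_add_one (p := p) (n := n) k
    omega

theorem card_digitSum_lt_le_mul_card_window {x y : ℝ} (hxy : y + 1 < x)
    (hy : 2 * y + 1 < (n * (p - 1) : ℕ)) :
    #{w : Fin n → Fin p | (digitSum w : ℝ) < x} ≤
      (n * (p - 1) + 1) * #{w : Fin n → Fin p | y < digitSum w ∧ (digitSum w : ℝ) < x} := by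
  set s := n * (p - 1)
  set below : Finset (Fin n → Fin p) := {w | (digitSum w : ℝ) < x}
  set window : Finset (Fin n → Fin p) := {w | y < digitSum w ∧ (digitSum w : ℝ) < x}
  -- the integer of the window closest to the centre `s / 2` of the symmetric distribution
  set k : ℤ := min (⌈x⌉ - 1) (s / 2) with hk
  have hk_lt : (k : ℝ) < x := by
    have := Int.ceil_lt_add_one x
    have : (k : ℝ) ≤ ⌈x⌉ - 1 := by exact_mod_cast min_le_left _ _
    linarith
  have lt_hk : y < k := by
    have hceil := Int.le_ceil x
    have hhalf : (s : ℝ) - 1 ≤ 2 * ((s / 2 : ℤ) : ℝ) := by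
      exact_mod_cast (by omega : (s : ℤ) - 1 ≤ 2 * (s / 2))
    rw [hk, Int.cast_min, lt_min_iff]
    push_cast
    constructor <;> linarith
  have hwindow : wordCount p n k ≤ #window := by
    refine card_le_card fun w hw => ?_
    simp only [window, mem_filter, Finset.mem_univ, true_and] at hw ⊢
    rw [show (digitSum w : ℝ) = k by exact_mod_cast hw]
    exact ⟨lt_hk, hk_lt⟩
  have hfiber (m : ℕ) : #{w ∈ below | digitSum w = m} ≤ #window := by
    by_cases hm : (m : ℝ) < x
    · have hmc : (m : ℤ) < ⌈x⌉ := Int.lt_ceil.mpr (by exact_mod_cast hm)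
      have hcentral : |2 * k - s| ≤ |2 * (m : ℤ) - s| := by
        have := le_abs_self (2 * (m : ℤ) - s)
        have := neg_abs_le (2 * (m : ℤ) - s)
        rw [abs_le]
        omega
      calc _ ≤ wordCount p n m := card_le_card fun w hw => by
              simp only [mem_filter, Finset.mem_univ, true_and] at hw ⊢
              exact_mod_cast hw.2
        _ ≤ wordCount p n k :=
              apply_le_apply_of_abs_le_of_symm wordCount_symm wordCount_monotoneOn hcentral
        _ ≤ _ := hwindow
    · refine (card_eq_zero.mpr <| filter_eq_empty_iff.mpr fun w hw hwm => hm ?_).trans_le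
        (Nat.zero_le _)
      simpa [below, hwm] using hw
  calc #below ≤ #window * #(range (s + 1)) := card_le_mul_card_image_of_maps_to
          (fun w _ => mem_range_succ_iff.mpr (digitSum_le w)) _ fun m _ => hfiber m
    _ = _ := by rw [card_range, mul_comm]

theorem card_digitSum_lt_mul_le {m : ℕ} (x : ℝ) :
    #{w : Fin m → Fin p | (digitSum w : ℝ) < m * x} *
        #{w : Fin n → Fin p | (digitSum w : ℝ) < n * x} ≤
      #{w : Fin (m + n) → Fin p | (digitSum w : ℝ) < (m + n : ℕ) * x} := by
  rw [← card_product]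
  refine card_le_card_of_injOn (fun w => Fin.append w.1 w.2) (fun w hw => ?_)
    ((Fin.appendEquiv m n).injective.injOn)
  simp only [coe_product, Set.mem_prod, mem_coe, mem_filter, Finset.mem_univ, true_and] at hw ⊢
  rw [digitSum_append]
  push_cast
  linarith [hw.1, hw.2]

lemma card_digitSum_lt_pos (hp : 0 < p) {x : ℝ} (hx : 0 < x) :
    0 < #{w : Fin n → Fin p | (digitSum w : ℝ) < x} :=
  card_pos.mpr ⟨fun _ => ⟨0, hp⟩, by simp [digitSum, hx]⟩

lemma card_digitSum_rev_real (hp : 1 ≤ p) (P : ℝ → Prop) [DecidablePred P] :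
    #{w : Fin n → Fin p | P (digitSum w)} =
      #{w : Fin n → Fin p | P (n * ((p : ℝ) - 1) - digitSum w)} := by
  rw [card_digitSum_rev fun m => P m]
  refine congrArg card (filter_congr fun w _ => ?_)
  rw [Nat.cast_sub (digitSum_le w), Nat.cast_mul, Nat.cast_sub hp, Nat.cast_one]

end DigitSum

section GrowthRate

open Real Topology

theorem limsup_eq_of_tendsto_sub {ι : Type*} {F : Filter ι} [F.NeBot] {f g : ι → ℝ}
    (h : Tendsto (g - f) F (𝓝 0)) (hf : IsBoundedUnder (· ≤ ·) F f)
    (hf' : IsBoundedUnder (· ≥ ·) F f) : limsup g F = limsup f F := by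
  have hg : g = f + (g - f) := by abel
  rw [hg]
  apply le_antisymm
  · calc limsup (f + (g - f)) F ≤ limsup f F + limsup (g - f) F :=
          limsup_add_le hf' hf h.isBoundedUnder_ge.isCoboundedUnder_le h.isBoundedUnder_le
      _ = limsup f F := by rw [h.limsup_eq, add_zero]
  · calc limsup f F = limsup f F + liminf (g - f) F := by rw [h.liminf_eq, add_zero]
      _ ≤ limsup (f + (g - f)) F :=
          le_limsup_add hf hf'.isCoboundedUnder_le h.isBoundedUnder_le h.isBoundedUnder_ge

lemma log_natCast_le_log_natCast {a b : ℕ} (h : a ≤ b) : log a ≤ log b := by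
  rcases Nat.eq_zero_or_pos a with rfl | ha
  · simpa using log_natCast_nonneg b
  · exact log_le_log (by exact_mod_cast ha) (by exact_mod_cast h)

lemma log_natCast_le_log_add_log_of_le_mul {a b c : ℕ} (h : b ≤ c * a) :
    log b ≤ log c + log a := by
  rcases Nat.eq_zero_or_pos b with rfl | hb
  · simpa using add_nonneg (log_natCast_nonneg c) (log_natCast_nonneg a)
  · have hca : 0 < c * a := hb.trans_le h
    rw [← log_mul (by exact_mod_cast (Nat.pos_of_mul_pos_right hca).ne')
      (by exact_mod_cast (Nat.pos_of_mul_pos_left hca).ne')]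
    exact log_le_log (by exact_mod_cast hb) (by exact_mod_cast h)

theorem tendsto_log_mul_add_one_div (M : ℕ) :
    Tendsto (fun n : ℕ => log (n * M + 1) / n) atTop (𝓝 0) := by
  have hlog : Tendsto (fun n : ℕ => log n / n) atTop (𝓝 0) :=
    isLittleO_log_id_atTop.tendsto_div_nhds_zero.comp tendsto_natCast_atTop_atTop
  have hupper : Tendsto (fun n : ℕ => log (M + 1) / n + log n / n) atTop (𝓝 0) := by
    simpa using (tendsto_const_div_atTop_nhds_zero_nat (log (M + 1))).add hlog
  have hM : (0 : ℝ) ≤ M := M.cast_nonneg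
  refine tendsto_of_tendsto_of_tendsto_of_le_of_le' tendsto_const_nhds hupper
    (Eventually.of_forall fun n => div_nonneg (log_nonneg ?_) n.cast_nonneg) ?_
  · have : (0 : ℝ) ≤ n * M := by positivity
    linarith
  filter_upwards [eventually_gt_atTop 0] with n hn
  have hn' : (1 : ℝ) ≤ n := by exact_mod_cast hn
  rw [← add_div]
  refine div_le_div_of_nonneg_right ?_ n.cast_nonneg
  rw [← log_mul (by positivity) (by positivity)]
  exact log_le_log (by positivity) (by nlinarith)

theorem limsup_log_div_eq_of_le_of_le_mul {a b : ℕ → ℕ} {p M : ℕ} (hab : ∀ n, a n ≤ b n)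
    (hba : ∀ᶠ n in atTop, b n ≤ (n * M + 1) * a n) (hb : ∀ n, b n ≤ p ^ n) :
    limsup (fun n : ℕ => log (b n) / (n * log p)) atTop =
      limsup (fun n : ℕ => log (a n) / (n * log p)) atTop := by
  have hden (n : ℕ) : 0 ≤ (n : ℝ) * log p := mul_nonneg n.cast_nonneg (log_natCast_nonneg p)
  have hf_nonneg (n : ℕ) : 0 ≤ log (a n) / (n * log p) :=
    div_nonneg (log_natCast_nonneg _) (hden n)
  have hfg (n : ℕ) : log (a n) / (n * log p) ≤ log (b n) / (n * log p) :=
    div_le_div_of_nonneg_right (log_natCast_le_log_natCast (hab n)) (hden n)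
  have hg_le_one (n : ℕ) : log (b n) / (n * log p) ≤ 1 := by
    refine div_le_one_of_le₀ ?_ (hden n)
    simpa [log_pow] using log_natCast_le_log_natCast (hb n)
  have hgap : ∀ᶠ n : ℕ in atTop,
      log (b n) / (n * log p) - log (a n) / (n * log p) ≤ log (n * M + 1) / n / log p := by
    filter_upwards [hba] with n hn
    rw [← sub_div, div_div]
    refine div_le_div_of_nonneg_right ?_ (hden n)
    have := log_natCast_le_log_add_log_of_le_mul hn
    push_cast at this
    linarith
  have hc : Tendsto (fun n : ℕ => log (n * M + 1) / n / log p) atTop (𝓝 0) := by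
    simpa using (tendsto_log_mul_add_one_div M).div_const (log p)
  refine limsup_eq_of_tendsto_sub ?_ (isBoundedUnder_of_eventually_le (a := 1)
    (Eventually.of_forall fun n => (hfg n).trans (hg_le_one n)))
    (isBoundedUnder_of_eventually_ge (a := 0) (Eventually.of_forall hf_nonneg))
  exact tendsto_of_tendsto_of_tendsto_of_le_of_le' tendsto_const_nhds hc
    (Eventually.of_forall fun n => sub_nonneg.mpr (hfg n)) hgap

theorem liminf_log_div_eq_limsup_of_supermul {a : ℕ → ℕ} {p : ℕ}
    (hmul : ∀ m n, a m * a n ≤ a (m + n)) (hpos : ∀ n, 0 < n → 0 < a n)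
    (hle : ∀ n, a n ≤ p ^ n) :
    liminf (fun n : ℕ => log (a n) / (n * log p)) atTop =
      limsup (fun n : ℕ => log (a n) / (n * log p)) atTop := by
  have hlog_zero : log (a 0) = 0 := by
    have : a 0 ≤ 1 := by simpa using hle 0
    interval_cases a 0 <;> simp
  -- Fekete's lemma for the subadditive sequence `-log aₙ`
  have hsub : Subadditive fun n => -log (a n) := by
    intro m n
    rcases Nat.eq_zero_or_pos m with rfl | hm
    · simp [hlog_zero]
    rcases Nat.eq_zero_or_pos n with rfl | hn
    · simp [hlog_zero]
    have ham : (0 : ℝ) < a m := by exact_mod_cast hpos m hm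
    have han : (0 : ℝ) < a n := by exact_mod_cast hpos n hn
    rw [← neg_add, neg_le_neg_iff, ← log_mul ham.ne' han.ne']
    exact log_le_log (mul_pos ham han) (by exact_mod_cast hmul m n)
  have hbdd : BddBelow (range fun n : ℕ => -log (a n) / n) := by
    refine ⟨-log p, ?_⟩
    rintro _ ⟨n, rfl⟩
    rcases Nat.eq_zero_or_pos n with rfl | hn
    · simpa using log_natCast_nonneg p
    have hlog : log (a n) ≤ n * log p := by
      simpa [log_pow] using log_natCast_le_log_natCast (hle n)
    rw [le_div_iff₀ (by exact_mod_cast hn)]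
    linarith
  have hlim : Tendsto (fun n : ℕ => log (a n) / (n * log p)) atTop
      (𝓝 (-hsub.lim / log p)) := by
    simpa [neg_div, div_div] using (hsub.tendsto_lim hbdd).neg.div_const (log p)
  rw [hlim.liminf_eq, hlim.limsup_eq]

end GrowthRate

section Entropy

open Finset DigitSum

variable {p n : ℕ} {α δ : ℝ}

lemma natCard_eq_card_digitSum (P : ℝ → Prop) [DecidablePred P] :
    Nat.card {w : Fin n → Fin p // P (∑ i, ((w i : ℕ) : ℝ))} =
      #{w : Fin n → Fin p | P (digitSum w)} := by
  rw [Nat.card_eq_fintype_card, Fintype.card_subtype]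
  simp [digitSum]

lemma hcount_eq_card : hcount p n α δ = #{w : Fin n → Fin p |
    n * (α - δ) < (digitSum w : ℝ) ∧ (digitSum w : ℝ) < n * (α + δ)} :=
  natCard_eq_card_digitSum fun t => n * (α - δ) < t ∧ t < n * (α + δ)

lemma hbarCount_eq_card :
    hbarCount p n α δ = #{w : Fin n → Fin p | (digitSum w : ℝ) < n * (α + δ)} :=
  natCard_eq_card_digitSum fun t => t < n * (α + δ)

lemma hlowCount_eq_card :
    hlowCount p n α δ = #{w : Fin n → Fin p | n * (α - δ) < (digitSum w : ℝ)} :=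
  natCard_eq_card_digitSum fun t => n * (α - δ) < t

lemma hcount_le_hbarCount : hcount p n α δ ≤ hbarCount p n α δ := by
  rw [hcount_eq_card, hbarCount_eq_card]
  refine card_le_card fun w hw => ?_
  simp only [mem_filter, Finset.mem_univ, true_and] at hw ⊢
  exact hw.2

lemma hbarCount_le_pow : hbarCount p n α δ ≤ p ^ n := by
  rw [hbarCount_eq_card]
  exact (card_filter_le _ _).trans_eq (by simp)

lemma hbarCount_mul_le (m n : ℕ) :
    hbarCount p m α δ * hbarCount p n α δ ≤ hbarCount p (m + n) α δ := by
  simp only [hbarCount_eq_card]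
  exact card_digitSum_lt_mul_le (α + δ)

lemma hbarCount_pos (hp : 0 < p) (hn : 0 < n) (h : 0 < α + δ) : 0 < hbarCount p n α δ := by
  rw [hbarCount_eq_card]
  exact card_digitSum_lt_pos hp (mul_pos (by exact_mod_cast hn) h)

lemma hcount_reflect (hp : 1 ≤ p) : hcount p n ((p : ℝ) - 1 - α) δ = hcount p n α δ := by
  rw [hcount_eq_card, hcount_eq_card, card_digitSum_rev_real hp
    fun t => n * ((p : ℝ) - 1 - α - δ) < t ∧ t < n * ((p : ℝ) - 1 - α + δ)]
  refine congrArg card (filter_congr fun w _ => ?_)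
  constructor <;> rintro ⟨h₁, h₂⟩ <;> constructor <;> linarith

lemma hlowCount_eq_hbarCount_reflect (hp : 1 ≤ p) :
    hlowCount p n α δ = hbarCount p n ((p : ℝ) - 1 - α) δ := by
  rw [hlowCount_eq_card, hbarCount_eq_card, card_digitSum_rev_real hp
    fun t => t < n * ((p : ℝ) - 1 - α + δ)]
  refine congrArg card (filter_congr fun w _ => ?_)
  constructor <;> intro h <;> linarith

lemma hbarCount_le_mul_hcount (hp : 1 ≤ p) (hα : α ≤ ((p : ℝ) - 1) / 2)
    (hn : 1 < 2 * n * δ) :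
    hbarCount p n α δ ≤ (n * (p - 1) + 1) * hcount p n α δ := by
  rw [hbarCount_eq_card, hcount_eq_card]
  refine card_digitSum_lt_le_mul_card_window (by linarith) ?_
  have : (n : ℝ) * α ≤ n * (((p : ℝ) - 1) / 2) := mul_le_mul_of_nonneg_left hα n.cast_nonneg
  rw [Nat.cast_mul, Nat.cast_sub hp, Nat.cast_one]
  linarith

theorem limsup_log_hbarCount_eq (hp : 1 ≤ p) (hα : α ≤ ((p : ℝ) - 1) / 2) (hδ : 0 < δ) :
    limsup (fun n : ℕ => Real.log (hbarCount p n α δ) / (n * Real.log p)) atTop =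
      limsup (fun n : ℕ => Real.log (hcount p n α δ) / (n * Real.log p)) atTop := by
  refine limsup_log_div_eq_of_le_of_le_mul (M := p - 1) (fun _ => hcount_le_hbarCount) ?_
    fun _ => hbarCount_le_pow
  have hlarge := tendsto_natCast_atTop_atTop.atTop_mul_const (by positivity : 0 < 2 * δ)
  filter_upwards [hlarge.eventually_gt_atTop 1] with n hn
  exact hbarCount_le_mul_hcount hp hα (by linarith)

theorem liminf_log_hbarCount_eq_limsup (hp : 1 ≤ p) (h : 0 < α + δ) :
    liminf (fun n : ℕ => Real.log (hbarCount p n α δ) / (n * Real.log p)) atTop =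
      limsup (fun n : ℕ => Real.log (hbarCount p n α δ) / (n * Real.log p)) atTop :=
  liminf_log_div_eq_limsup_of_supermul hbarCount_mul_le (fun _ hn => hbarCount_pos hp hn h)
    fun _ => hbarCount_le_pow

end Entropy

theorem upper_lower_entropy_eq_entropy_general (p : ℕ) (hp : 2 ≤ p) (α : ℝ)
    (hα' : α ≤ (p : ℝ) - 1) :
    (α ≤ ((p : ℝ) - 1) / 2 → upperEntropy p α = entropy p α) ∧
    (((p : ℝ) - 1) / 2 ≤ α → lowerEntropy p α = entropy p α) := by
  have hp₁ : 1 ≤ p := by omega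
  refine ⟨fun hα => iInf_congr fun δ => limsup_log_hbarCount_eq hp₁ hα δ.2, fun hα => ?_⟩
  refine iInf_congr fun δ => ?_
  calc liminf (fun n : ℕ => Real.log (hlowCount p n α δ) / (n * Real.log p)) atTop
      = limsup (fun n : ℕ => Real.log (hbarCount p n (p - 1 - α) δ) / (n * Real.log p))
          atTop := by
        simp only [hlowCount_eq_hbarCount_reflect hp₁]
        exact liminf_log_hbarCount_eq_limsup hp₁ (by linarith [δ.2])
    _ = limsup (fun n : ℕ => Real.log (hcount p n (p - 1 - α) δ) / (n * Real.log p)) atTop :=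
        limsup_log_hbarCount_eq hp₁ (by linarith) δ.2
    _ = _ := by simp only [hcount_reflect hp₁]

/-- For an integer `p ≥ 2` and `0 ≤ α ≤ p-1`: if `α ≤ (p-1)/2` then
`h̄(α) = h(α)`; if `(p-1)/2 ≤ α` then `h̲(α) = h(α)`. -/
theorem upper_lower_entropy_eq_entropy (p : ℕ) (hp : 2 ≤ p) (α : ℝ)
    (hα : 0 ≤ α) (hα' : α ≤ (p : ℝ) - 1) :
    (α ≤ ((p : ℝ) - 1) / 2 → upperEntropy p α = entropy p α) ∧
    (((p : ℝ) - 1) / 2 ≤ α → lowerEntropy p α = entropy p α) :=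
  upper_lower_entropy_eq_entropy_general p hp α hα'
end
end

section
/- Fix an integer p ≥ 2 and a real number 0 ≤ α ≤ p−1. Then lim_{n→∞} (log card W([αn],n))/(n log p) = h(α), where W([αn],n) is the set of words in {0,…,p−1}^n with digit sum equal to the integer part [αn] of αn. -/
open Filter MeasureTheory Set
open scoped ENNReal

noncomputable section

/-- `ω(α,n) = card W([αn],n)`: the number of words of length `n` over `{0,…,p-1}` with
digit sum equal to the integer part of `αn`. -/
def omegaCount (p : ℕ) (α : ℝ) (n : ℕ) : ℕ :=
  Nat.card {w : Fin n → Fin p // (∑ i, ((w i : ℕ) : ℤ)) = ⌊α * n⌋}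

/-!
Write `ω(n) = card W([αn], n)`. Concatenating words, then padding with a block of fixed length `k`
that absorbs the rounding errors, gives `ω(n) ω(m) ≤ ω(n + m + k)` for `α < p - 1`, so
`log ω(n) / n` converges by Fekete's lemma. Conversely a word of length `n` with digit sum within
`nδ` of `αn` pads, by a block of length about `nδ / min(α, p - 1 - α)`, to a word counted by `ω`,
while `ω(n) ≤ h(α,n,δ)` once `nδ ≥ 1`; letting `δ → 0` identifies the limit with `h(α)`.
At the endpoints `α = 0, p - 1` one has `ω = 1`, and a Chernoff bound gives `h(α) = 0`.
-/

open Topology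

theorem card_subtype_le_pow {p n : ℕ} (Q : (Fin n → Fin p) → Prop) :
    Nat.card {w // Q w} ≤ p ^ n := by
  simpa using Finite.card_subtype_le Q

theorem Nat.card_subtype_mono {β : Type*} [Finite β] {Q R : β → Prop} (h : ∀ b, Q b → R b) :
    Nat.card {b // Q b} ≤ Nat.card {b // R b} :=
  Nat.card_le_card_of_injective (Subtype.map id h) (Subtype.map_injective h Function.injective_id)

theorem Int.mem_Icc_of_cast_mem_Ioo {z b : ℤ} (h : (z : ℝ) ∈ Ioo (-1 : ℝ) (b + 1)) :
    z ∈ Icc 0 b := by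
  have h0 : (-1 : ℤ) < z := by exact_mod_cast h.1
  have h1 : z < b + 1 := by exact_mod_cast h.2
  exact ⟨by omega, by omega⟩

theorem log_natCast_le_log_natCast_s16 {m n : ℕ} (h : m ≤ n) : Real.log m ≤ Real.log n := by
  rcases m.eq_zero_or_pos with rfl | hm
  · simpa using Real.log_natCast_nonneg n
  · exact Real.log_le_log (by exact_mod_cast hm) (by exact_mod_cast h)

/-- Fekete's lemma with a gap: `n ↦ -a (n - k)` is subadditive. -/
theorem Monotone.exists_tendsto_div_of_add_le {a : ℕ → ℝ} (ha : Monotone a) (ha0 : a 0 = 0)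
    {c : ℝ} (hc : ∀ n, a n ≤ c * n) {k : ℕ} (hk : ∀ m n, a m + a n ≤ a (m + n + k)) :
    ∃ L, Tendsto (fun n => a n / n) atTop (𝓝 L) := by
  have hsub : Subadditive fun n => -a (n - k) := by
    intro m n
    have : a (m - k) + a (n - k) ≤ a (m + n - k) := by
      rcases le_total k m with hm | hm <;> rcases le_total k n with hn | hn
      · simpa [show m + n - k = m - k + (n - k) + k by omega] using hk (m - k) (n - k)
      · rw [Nat.sub_eq_zero_of_le hn, ha0, add_zero]
        exact ha (by omega)
      · rw [Nat.sub_eq_zero_of_le hm, ha0, zero_add]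
        exact ha (by omega)
      · rw [Nat.sub_eq_zero_of_le hm, Nat.sub_eq_zero_of_le hn, ha0, add_zero, ← ha0]
        exact ha (Nat.zero_le _)
    linarith
  have hc0 : 0 ≤ c := by simpa [ha0] using (ha (Nat.zero_le 1)).trans (hc 1)
  have hbdd : BddBelow (range fun n => -a (n - k) / n) := by
    refine ⟨-c, forall_mem_range.2 fun n => ?_⟩
    rcases n.eq_zero_or_pos with rfl | hn
    · simpa using hc0
    · rw [le_div_iff₀ (by positivity), neg_mul, neg_le_neg_iff]
      exact (hc _).trans (by gcongr; exact_mod_cast n.sub_le k)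
  refine ⟨-hsub.lim, ?_⟩
  have h := ((hsub.tendsto_lim hbdd).comp (tendsto_add_atTop_nat k)).neg.div
    (tendsto_natCast_div_add_atTop (k : ℝ)) one_ne_zero
  rw [div_one] at h
  refine h.congr' ((eventually_ne_atTop 0).mono fun n hn => ?_)
  simp only [Pi.div_apply, Function.comp_apply, Nat.add_sub_cancel, Nat.cast_add, neg_div, neg_neg]
  field_simp

/-- `card W(P, n)` in the paper's notation. -/
def wordCount (p n : ℕ) (P : ℤ) : ℕ :=
  Nat.card {w : Fin n → Fin p // ∑ i, ((w i : ℕ) : ℤ) = P}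

theorem omegaCount_eq_wordCount (p : ℕ) (α : ℝ) (n : ℕ) :
    omegaCount p α n = wordCount p n ⌊α * n⌋ := rfl

section Words

variable {p : ℕ}

theorem exists_sum_digits_eq {n : ℕ} {P : ℤ} (h0 : 0 ≤ P)
    (hP : P ≤ ((p : ℤ) - 1) * n) : ∃ w : Fin n → Fin p, ∑ i, ((w i : ℕ) : ℤ) = P := by
  induction n generalizing P with
  | zero => exact ⟨Fin.elim0, by simp at hP ⊢; omega⟩
  | succ n ih =>
    obtain rfl | hp := p.eq_zero_or_pos
    · push_cast at hP
      nlinarith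
    obtain ⟨w, hw⟩ := ih (P := P - min P ((p : ℤ) - 1)) (by omega) (by
      push_cast at hP
      rcases min_cases P ((p : ℤ) - 1) with ⟨h, -⟩ | ⟨h, -⟩ <;> rw [h] <;> nlinarith)
    refine ⟨Fin.cons ⟨(min P ((p : ℤ) - 1)).toNat, by omega⟩ w, ?_⟩
    rw [Fin.sum_univ_succ]
    simp only [Fin.cons_zero, Fin.cons_succ, hw]
    omega

theorem card_le_wordCount_add {n k : ℕ} {T : ℤ} {Q : (Fin n → Fin p) → Prop}
    (hQ : ∀ w, Q w → T - ∑ i, ((w i : ℕ) : ℤ) ∈ Icc 0 (((p : ℤ) - 1) * k)) :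
    Nat.card {w // Q w} ≤ wordCount p (n + k) T := by
  choose pad hpad using fun w : {w // Q w} => exists_sum_digits_eq (hQ w.1 w.2).1 (hQ w.1 w.2).2
  refine Nat.card_le_card_of_injective (fun w => ⟨Fin.append w.1 (pad w), ?_⟩) fun w w' h => ?_
  · simp [Fin.sum_univ_add, hpad]
  · exact Subtype.ext <| congrArg Prod.fst <| (Fin.appendEquiv n k).injective
      (a₁ := (w.1, pad w)) (a₂ := (w'.1, pad w')) (congrArg Subtype.val h)

theorem wordCount_mul_le (n m : ℕ) (P Q : ℤ) :
    wordCount p n P * wordCount p m Q ≤ wordCount p (n + m) (P + Q) := by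
  rw [wordCount, wordCount, wordCount, ← Nat.card_prod]
  refine Nat.card_le_card_of_injective (fun x => ⟨Fin.append x.1.1 x.2.1, ?_⟩) fun x y h => ?_
  · simp [Fin.sum_univ_add, x.1.2, x.2.2]
  · have := (Fin.appendEquiv n m).injective (a₁ := (x.1.1, x.2.1)) (a₂ := (y.1.1, y.2.1))
      (congrArg Subtype.val h)
    simp only [Prod.ext_iff] at this
    exact Prod.ext (Subtype.ext this.1) (Subtype.ext this.2)

theorem wordCount_zero (hp : 0 < p) (n : ℕ) : wordCount p n 0 = 1 := by
  rw [wordCount, Nat.card_eq_one_iff_unique]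
  refine ⟨⟨fun ⟨w, hw⟩ ⟨v, hv⟩ => ?_⟩, ⟨⟨fun _ => ⟨0, hp⟩, by simp⟩⟩⟩
  have hzero : ∀ u : Fin n → Fin p, ∑ i, ((u i : ℕ) : ℤ) = 0 → u = fun _ => ⟨0, hp⟩ := by
    intro u hu
    funext i
    have := (Finset.sum_eq_zero_iff_of_nonneg fun j _ => Int.natCast_nonneg (u j : ℕ)).mp hu i
      (Finset.mem_univ i)
    exact Fin.ext (by exact_mod_cast this)
  exact Subtype.ext ((hzero w hw).trans (hzero v hv).symm)

theorem sum_rev_digits {R : Type*} [CommRing R] {n : ℕ} (w : Fin n → Fin p) :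
    ∑ i, (((w i).rev : ℕ) : R) = n * ((p : R) - 1) - ∑ i, ((w i : ℕ) : R) := by
  have hrev : ∀ x : Fin p, ((x.rev : ℕ) : R) = (p : R) - 1 - (x : ℕ) := fun x => by
    rw [Fin.val_rev, Nat.cast_sub x.2]
    push_cast
    ring
  simp only [hrev, Finset.sum_sub_distrib, Finset.sum_const, Finset.card_univ, Fintype.card_fin,
    nsmul_eq_mul]
  ring

def revDigits (n : ℕ) : Equiv.Perm (Fin n → Fin p) :=
  Equiv.piCongrRight fun _ => Fin.revPerm

theorem wordCount_reflect (n : ℕ) (P : ℤ) :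
    wordCount p n (n * ((p : ℤ) - 1) - P) = wordCount p n P := by
  refine Nat.card_congr ((revDigits n).subtypeEquiv fun w => ?_)
  simp only [revDigits, Equiv.piCongrRight_apply, Pi.map_apply, Fin.revPerm_apply,
    sum_rev_digits]
  omega

end Words

section OmegaCount

variable {p : ℕ} {α : ℝ}

theorem omegaCount_le_pow (p : ℕ) (α : ℝ) (n : ℕ) : omegaCount p α n ≤ p ^ n :=
  card_subtype_le_pow _

theorem omegaCount_monotone (hα : 0 ≤ α) (hα' : α ≤ p - 1) : Monotone (omegaCount p α) := by
  refine monotone_nat_of_le_succ fun n => card_le_wordCount_add (k := 1) fun w hw => ?_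
  rw [hw]
  refine Int.mem_Icc_of_cast_mem_Ioo ⟨?_, ?_⟩ <;> push_cast <;>
    linarith [Int.floor_le (α * n), Int.sub_one_lt_floor (α * n), Int.floor_le (α * (n + 1)),
      Int.sub_one_lt_floor (α * (n + 1))]

theorem omegaCount_zero_right (hp : 0 < p) (α : ℝ) : omegaCount p α 0 = 1 := by
  simp [omegaCount_eq_wordCount, wordCount_zero hp]

theorem omegaCount_pos (hα : 0 ≤ α) (hα' : α ≤ p - 1) (n : ℕ) : 0 < omegaCount p α n := by
  have hp : 0 < p := by exact_mod_cast (by linarith : (0 : ℝ) < p)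
  exact omegaCount_zero_right hp α ▸ Nat.one_pos |>.trans_le (omegaCount_monotone hα hα' n.zero_le)

/-- The padding block of length `k` absorbs the two rounding errors of `⌊α n⌋ + ⌊α m⌋`. -/
theorem omegaCount_mul_le (hα : 0 ≤ α) {k : ℕ} (hk : 2 ≤ k * ((p : ℝ) - 1 - α)) (n m : ℕ) :
    omegaCount p α n * omegaCount p α m ≤ omegaCount p α (n + m + k) := by
  refine (wordCount_mul_le n m _ _).trans (card_le_wordCount_add fun w hw => ?_)
  rw [hw]
  have hαk : 0 ≤ α * k := by positivity
  refine Int.mem_Icc_of_cast_mem_Ioo ⟨?_, ?_⟩ <;> push_cast <;>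
    linarith [Int.floor_le (α * n), Int.sub_one_lt_floor (α * n), Int.floor_le (α * m),
      Int.sub_one_lt_floor (α * m), Int.floor_le (α * (n + m + k)),
      Int.sub_one_lt_floor (α * (n + m + k))]

theorem omegaCount_le_hcount {δ : ℝ} {n : ℕ} (hn : 1 ≤ δ * n) :
    omegaCount p α n ≤ hcount p n α δ := by
  refine Nat.card_subtype_mono fun w hw => ?_
  have hsum : ∑ i, ((w i : ℕ) : ℝ) = ⌊α * n⌋ := by exact_mod_cast hw
  rw [hsum]
  constructor <;> linarith [Int.floor_le (α * n), Int.sub_one_lt_floor (α * n)]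

theorem hcount_le_omegaCount_add {δ : ℝ} {n k : ℕ} (hk : δ * n + 1 ≤ k * α)
    (hk' : δ * n ≤ k * ((p : ℝ) - 1 - α)) : hcount p n α δ ≤ omegaCount p α (n + k) := by
  refine card_le_wordCount_add fun w ⟨hlo, hhi⟩ => Int.mem_Icc_of_cast_mem_Ioo ⟨?_, ?_⟩ <;>
    push_cast <;>
    linarith [Int.floor_le (α * (n + k)), Int.sub_one_lt_floor (α * (n + k))]

end OmegaCount

def logRate (p : ℕ) (c : ℕ → ℕ) (n : ℕ) : ℝ :=
  Real.log (c n) / (n * Real.log p)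

section LogRate

variable {p : ℕ} {c d : ℕ → ℕ}

theorem logRate_nonneg (p : ℕ) (c : ℕ → ℕ) (n : ℕ) : 0 ≤ logRate p c n :=
  div_nonneg (Real.log_natCast_nonneg _) (mul_nonneg n.cast_nonneg (Real.log_natCast_nonneg p))

theorem logRate_le_logRate {n : ℕ} (h : c n ≤ d n) : logRate p c n ≤ logRate p d n :=
  div_le_div_of_nonneg_right (log_natCast_le_log_natCast_s16 h)
    (mul_nonneg n.cast_nonneg (Real.log_natCast_nonneg p))

theorem logRate_le_one {n : ℕ} (h : c n ≤ p ^ n) : logRate p c n ≤ 1 := by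
  refine (logRate_le_logRate (d := (p ^ ·)) h).trans ?_
  rw [logRate, Nat.cast_pow, Real.log_pow]
  exact div_self_le_one _

theorem isBoundedUnder_logRate (hc : ∀ n, c n ≤ p ^ n) :
    IsBoundedUnder (· ≤ ·) atTop (logRate p c) :=
  isBoundedUnder_of ⟨1, fun n => logRate_le_one (hc n)⟩

theorem isCoboundedUnder_logRate (p : ℕ) (c : ℕ → ℕ) :
    IsCoboundedUnder (· ≤ ·) atTop (logRate p c) :=
  isCoboundedUnder_le_of_le atTop (logRate_nonneg p c)

theorem limsup_logRate_nonneg (hc : ∀ n, c n ≤ p ^ n) : 0 ≤ limsup (logRate p c) atTop :=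
  le_limsup_of_le (isBoundedUnder_logRate hc) fun _ hb =>
    let ⟨n, hn⟩ := hb.exists
    (logRate_nonneg p c n).trans hn

end LogRate

section Entropy

variable {p : ℕ} {α : ℝ}

theorem hcount_le_pow (p n : ℕ) (α δ : ℝ) : hcount p n α δ ≤ p ^ n :=
  card_subtype_le_pow _

theorem entropy_nonneg : 0 ≤ entropy p α :=
  have : Nonempty {δ : ℝ // 0 < δ} := ⟨⟨1, one_pos⟩⟩
  le_ciInf fun δ => limsup_logRate_nonneg (c := (hcount p · α δ)) (hcount_le_pow p · α δ)

theorem entropy_le_of_tendsto {δ : ℝ} (hδ : 0 < δ) {g : ℕ → ℝ} {x : ℝ}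
    (hle : ∀ᶠ n in atTop, logRate p (hcount p · α δ) n ≤ g n) (hg : Tendsto g atTop (𝓝 x)) :
    entropy p α ≤ x := by
  have hbdd :
      BddBelow (range fun δ : {δ : ℝ // 0 < δ} => limsup (logRate p (hcount p · α δ)) atTop) :=
    ⟨0, forall_mem_range.2 fun δ => limsup_logRate_nonneg (hcount_le_pow p · α δ)⟩
  calc entropy p α ≤ limsup (logRate p (hcount p · α δ)) atTop := ciInf_le hbdd ⟨δ, hδ⟩
    _ ≤ limsup g atTop :=
      limsup_le_limsup hle (isCoboundedUnder_logRate _ _) hg.isBoundedUnder_le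
    _ = x := hg.limsup_eq

theorem le_entropy_of_tendsto_logRate_omegaCount {C : ℝ}
    (hC : Tendsto (logRate p (omegaCount p α)) atTop (𝓝 C)) :
    C ≤ entropy p α := by
  have : Nonempty {δ : ℝ // 0 < δ} := ⟨⟨1, one_pos⟩⟩
  refine le_ciInf fun ⟨δ, hδ⟩ => hC.limsup_eq ▸ limsup_le_limsup ?_
    (isCoboundedUnder_logRate _ _) (isBoundedUnder_logRate (hcount_le_pow p · α δ))
  filter_upwards [eventually_ge_atTop ⌈δ⁻¹⌉₊] with n hn
  refine logRate_le_logRate (d := (hcount p · α δ)) (omegaCount_le_hcount ?_)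
  rw [← inv_mul_le_iff₀ hδ, mul_one]
  exact Nat.ceil_le.1 hn

end Entropy

section Boundary

variable {p : ℕ}

/-- Chernoff's bound: weight each word `w` by `t ^ (∑ i, w i)`. -/
theorem card_sum_lt_mul_rpow_le (p n : ℕ) {t : ℝ} (ht0 : 0 < t) (ht1 : t ≤ 1) (s : ℝ) :
    (Nat.card {w : Fin n → Fin p // ∑ i, ((w i : ℕ) : ℝ) < s} : ℝ) * t ^ s ≤
      (∑ x : Fin p, t ^ (x : ℕ)) ^ n := by
  classical
  rw [Fintype.sum_pow, Nat.card_eq_fintype_card, Fintype.card_subtype, Finset.card_eq_sum_ones,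
    Nat.cast_sum, Finset.sum_mul]
  refine (Finset.sum_le_sum fun w hw => ?_).trans
    (Finset.sum_le_sum_of_subset_of_nonneg (Finset.filter_subset _ _) fun _ _ _ => by positivity)
  rw [Nat.cast_one, one_mul]
  simp_rw [← Real.rpow_natCast, ← Real.rpow_sum_of_pos ht0]
  exact Real.rpow_le_rpow_of_exponent_ge ht0 ht1 (Finset.mem_filter.1 hw).2.le

theorem sum_pow_le_one_add_mul (hp : 0 < p) {t : ℝ} (ht0 : 0 ≤ t) (ht1 : t ≤ 1) :
    ∑ x : Fin p, t ^ (x : ℕ) ≤ 1 + ((p : ℝ) - 1) * t := by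
  obtain ⟨m, rfl⟩ : ∃ m, p = m + 1 := ⟨p - 1, by omega⟩
  rw [Fin.sum_univ_eq_sum_range (t ^ ·), Finset.sum_range_succ', pow_zero, add_comm]
  have h := Finset.sum_le_card_nsmul (Finset.range m) (fun i => t ^ (i + 1)) t
    fun i _ => pow_le_of_le_one ht0 ht1 i.succ_ne_zero
  simp only [Finset.card_range, nsmul_eq_mul] at h
  push_cast
  linarith

theorem log_card_sum_lt_le (hp : 0 < p) (n : ℕ) {δ : ℝ} (hδ0 : 0 < δ) (hδ1 : δ ≤ 1) :
    Real.log (Nat.card {w : Fin n → Fin p // ∑ i, ((w i : ℕ) : ℝ) < n * δ}) ≤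
      n * (Real.negMulLog δ + ((p : ℝ) - 1) * δ) := by
  set N := Nat.card {w : Fin n → Fin p // ∑ i, ((w i : ℕ) : ℝ) < n * δ}
  set B := ∑ x : Fin p, δ ^ (x : ℕ)
  have hB1 : 1 ≤ B := by
    simpa using Finset.single_le_sum (f := fun x : Fin p => δ ^ (x : ℕ))
      (fun _ _ => by positivity) (Finset.mem_univ ⟨0, hp⟩)
  have hlogB : Real.log B ≤ ((p : ℝ) - 1) * δ := by
    linarith [Real.log_le_sub_one_of_pos (by positivity : 0 < B),
      sum_pow_le_one_add_mul hp hδ0.le hδ1]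
  have hpδ : 0 ≤ ((p : ℝ) - 1) * δ := by
    have : (1 : ℝ) ≤ p := by exact_mod_cast hp
    nlinarith
  rcases N.eq_zero_or_pos with hN | hN
  · rw [hN, Nat.cast_zero, Real.log_zero]
    have := Real.negMulLog_nonneg hδ0.le hδ1
    positivity
  have hchernoff := card_sum_lt_mul_rpow_le p n hδ0 hδ1 (n * δ)
  have hlog := Real.log_le_log (by positivity) hchernoff
  rw [Real.log_mul (by positivity) (by positivity), Real.log_rpow hδ0, Real.log_pow] at hlog
  rw [Real.negMulLog]
  nlinarith [mul_le_mul_of_nonneg_left hlogB n.cast_nonneg]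

theorem entropy_eq_zero_of_hcount_le (hp : 1 < p) {α : ℝ}
    (h : ∀ δ > 0, ∀ n,
      hcount p n α δ ≤ Nat.card {w : Fin n → Fin p // ∑ i, ((w i : ℕ) : ℝ) < n * δ}) :
    entropy p α = 0 := by
  have hlogp : 0 < Real.log p := Real.log_pos (by exact_mod_cast hp)
  set f : ℝ → ℝ := fun δ => (Real.negMulLog δ + ((p : ℝ) - 1) * δ) / Real.log p
  have hbound : ∀ δ ∈ Ioc (0 : ℝ) 1, entropy p α ≤ f δ := fun δ ⟨hδ0, hδ1⟩ => by
    refine entropy_le_of_tendsto hδ0 ?_ tendsto_const_nhds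
    filter_upwards [eventually_gt_atTop 0] with n hn
    calc logRate p (hcount p · α δ) n
        ≤ n * (Real.negMulLog δ + ((p : ℝ) - 1) * δ) / (n * Real.log p) :=
          div_le_div_of_nonneg_right ((log_natCast_le_log_natCast_s16 (h δ hδ0 n)).trans
            (log_card_sum_lt_le (by omega) n hδ0 hδ1)) (by positivity)
      _ = f δ := mul_div_mul_left _ _ (by positivity)
  have hf : Tendsto f (𝓝[>] 0) (𝓝 0) := by
    have hcont : Continuous f := by fun_prop
    simpa [f] using (hcont.tendsto 0).mono_left nhdsWithin_le_nhds
  exact le_antisymm (ge_of_tendsto hf (eventually_of_mem (Ioc_mem_nhdsGT one_pos) hbound))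
    entropy_nonneg

theorem entropy_zero (hp : 1 < p) : entropy p 0 = 0 :=
  entropy_eq_zero_of_hcount_le hp fun δ _ n => Nat.card_subtype_mono fun w hw => by simpa using hw.2

theorem entropy_sub_one (hp : 1 < p) : entropy p ((p : ℝ) - 1) = 0 := by
  refine entropy_eq_zero_of_hcount_le hp fun δ _ n =>
    (Nat.card_subtype_mono fun w hw => hw.1).trans_eq
    (Nat.card_congr ((revDigits n).subtypeEquiv fun w => ?_))
  simp only [revDigits, Equiv.piCongrRight_apply, Pi.map_apply, Fin.revPerm_apply, sum_rev_digits]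
  constructor <;> intro <;> linarith

theorem omegaCount_alpha_zero (hp : 0 < p) (n : ℕ) : omegaCount p 0 n = 1 := by
  simp [omegaCount_eq_wordCount, wordCount_zero hp]

theorem omegaCount_alpha_sub_one (hp : 0 < p) (n : ℕ) : omegaCount p ((p : ℝ) - 1) n = 1 := by
  have hfloor : ⌊((p : ℝ) - 1) * n⌋ = n * ((p : ℤ) - 1) - 0 := by
    rw [← Int.floor_intCast (R := ℝ) (_ - _)]
    push_cast
    ring_nf
  rw [omegaCount_eq_wordCount, hfloor, wordCount_reflect, wordCount_zero hp]

end Boundary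

section Interior

variable {p : ℕ} {α : ℝ}

theorem exists_tendsto_logRate_omegaCount (hα : 0 ≤ α) (hα' : α < p - 1) :
    ∃ C, Tendsto (logRate p (omegaCount p α)) atTop (𝓝 C) := by
  have hp : 0 < p := by exact_mod_cast (by linarith : (0 : ℝ) < p)
  obtain ⟨k, hk⟩ : ∃ k : ℕ, 2 ≤ k * ((p : ℝ) - 1 - α) := by
    obtain ⟨k, hk⟩ := exists_nat_ge (2 / ((p : ℝ) - 1 - α))
    exact ⟨k, (div_le_iff₀ (by linarith)).1 hk⟩
  have hpos : ∀ n, (0 : ℝ) < omegaCount p α n := fun n => by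
    exact_mod_cast omegaCount_pos hα hα'.le n
  obtain ⟨L, hL⟩ := Monotone.exists_tendsto_div_of_add_le
    (a := fun n => Real.log (omegaCount p α n)) (c := Real.log p)
    (fun m n hmn => log_natCast_le_log_natCast_s16 (omegaCount_monotone hα hα'.le hmn))
    (by simp [omegaCount_zero_right hp])
    (fun n => by
      simpa [Real.log_pow, mul_comm] using log_natCast_le_log_natCast_s16 (omegaCount_le_pow p α n))
    fun m n => by
      rw [← Real.log_mul (hpos m).ne' (hpos n).ne']
      exact_mod_cast log_natCast_le_log_natCast_s16 (omegaCount_mul_le hα hk m n)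
  exact ⟨L / Real.log p, (hL.div_const _).congr fun n => by simp only [logRate, div_div]⟩

theorem tendsto_add_ceil_mul_add_div {ε : ℝ} (hε : 0 ≤ ε) (K : ℕ) :
    Tendsto (fun n : ℕ => ((n + (⌈ε * n⌉₊ + K) : ℕ) : ℝ) / n) atTop (𝓝 (1 + ε)) := by
  have h1 := (tendsto_nat_ceil_mul_div_atTop hε).comp tendsto_natCast_atTop_atTop
  have h2 := tendsto_const_div_atTop_nhds_zero_nat (K : ℝ)
  have h := tendsto_const_nhds (x := (1 : ℝ)).add (h1.add h2)
  rw [add_zero] at h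
  refine h.congr' ((eventually_ne_atTop 0).mono fun n hn => ?_)
  simp only [Function.comp_apply, Nat.cast_add]
  field_simp

/-- With `β = min α (p - 1 - α)`, words counted by `hcount p n α (ε * β)` pad to length
`n + ⌈ε n⌉ + ⌈β⁻¹⌉`, which costs the factor `1 + ε`. -/
theorem entropy_le_mul_one_add (hα : 0 < α) (hα' : α < p - 1) {C : ℝ}
    (hC : Tendsto (logRate p (omegaCount p α)) atTop (𝓝 C)) {ε : ℝ} (hε : 0 < ε) :
    entropy p α ≤ C * (1 + ε) := by
  set β := min α ((p : ℝ) - 1 - α)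
  have hβ : 0 < β := lt_min hα (by linarith)
  have hβα' : β ≤ (p : ℝ) - 1 - α := min_le_right _ _
  set k : ℕ → ℕ := fun n => ⌈ε * n⌉₊ + ⌈β⁻¹⌉₊
  have hk : ∀ n : ℕ, ε * β * n + 1 ≤ k n * β := fun n => by
    have h1 := Nat.le_ceil (ε * n)
    have h2 := Nat.le_ceil β⁻¹
    calc ε * β * n + 1 = (ε * n + β⁻¹) * β := by field_simp
      _ ≤ k n * β := by simp only [k]; push_cast; gcongr
  have hpad : ∀ n, hcount p n α (ε * β) ≤ omegaCount p α (n + k n) := fun n =>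
    hcount_le_omegaCount_add ((hk n).trans (by gcongr; exact min_le_left _ _))
      (by linarith [hk n, mul_le_mul_of_nonneg_left hβα' (k n).cast_nonneg])
  have hm : Tendsto (fun n => n + k n) atTop atTop :=
    tendsto_atTop_mono (fun n => n.le_add_right (k n)) tendsto_id
  refine entropy_le_of_tendsto (mul_pos hε hβ) ?_
    ((hC.comp hm).mul (tendsto_add_ceil_mul_add_div hε.le ⌈β⁻¹⌉₊))
  filter_upwards [eventually_gt_atTop 0] with n hn
  calc logRate p (hcount p · α (ε * β)) n
      ≤ logRate p (fun n => omegaCount p α (n + k n)) n :=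
        logRate_le_logRate (d := fun n => omegaCount p α (n + k n)) (hpad n)
    _ = _ := by
      simp only [logRate, Function.comp_apply, k]
      field_simp

theorem entropy_le_of_tendsto_logRate_omegaCount (hα : 0 < α) (hα' : α < p - 1) {C : ℝ}
    (hC : Tendsto (logRate p (omegaCount p α)) atTop (𝓝 C)) : entropy p α ≤ C := by
  have hf : Tendsto (fun ε => C * (1 + ε)) (𝓝[>] 0) (𝓝 C) := by
    have hcont : Continuous fun ε => C * (1 + ε) := by fun_prop
    simpa using (hcont.tendsto 0).mono_left nhdsWithin_le_nhds
  exact ge_of_tendsto hf (eventually_mem_nhdsWithin.mono fun _ => entropy_le_mul_one_add hα hα' hC)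

end Interior

/-- For an integer `p ≥ 2` and `0 ≤ α ≤ p-1`,
`lim_{n→∞} log card W([αn],n) / (n log p) = h(α)`. -/
theorem tendsto_log_omegaCount (p : ℕ) (hp : 2 ≤ p) (α : ℝ)
    (hα : 0 ≤ α) (hα' : α ≤ (p : ℝ) - 1) :
    Tendsto (fun n : ℕ => Real.log (omegaCount p α n) / (n * Real.log p)) atTop
      (nhds (entropy p α)) := by
  rcases hα.eq_or_lt with rfl | hα0
  · simp [entropy_zero hp, omegaCount_alpha_zero (by omega : 0 < p)]
  rcases hα'.eq_or_lt with rfl | hαp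
  · simp [entropy_sub_one hp, omegaCount_alpha_sub_one (by omega : 0 < p)]
  obtain ⟨C, hC⟩ := exists_tendsto_logRate_omegaCount hα hαp
  rwa [le_antisymm (entropy_le_of_tendsto_logRate_omegaCount hα0 hαp hC)
    (le_entropy_of_tendsto_logRate_omegaCount hC)]
end
end

section
/- Fix an integer p ≥ 2. For every x ∈ [0,1] and all integers m, n ≥ 1, the sequences n ↦ −M̲_n(x) and n ↦ M̄_n(x) are subadditive, i.e. −M̲_{m+n}(x)·(m+n) ≤ −M̲_m(x)·m − M̲_n(x)·n and M̄_{m+n}(x)·(m+n) ≤ M̄_m(x)·m + M̄_n(x)·n; consequently the limits lim_{n→∞} M̲_n(x) and lim_{n→∞} M̄_n(x) exist. -/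
open Filter MeasureTheory Set
open scoped ENNReal

noncomputable section

/-!
Cutting a window of length `a + b` starting at `m` into windows of lengths `a` and `b` gives
`S_{a+b}(T^m x) = S_a(T^m x) + S_b(T^{m+a} x)`. Since `limsup` is subadditive and invariant
under the shift `m ↦ m + a`, the sequence `n ↦ n M̄ₙ(x) = limsup_m S_n(T^m x)` is subadditive,
and Fekete's lemma gives the limit of `M̄ₙ(x)`; the digits being bounded keeps every `limsup`
finite. Replacing the digits by their negatives turns `-n M̲ₙ(x)` into the same kind of
sequence.
-/

def windowSum (d : ℕ → ℝ) (m n : ℕ) : ℝ := ∑ i ∈ Finset.range n, d (m + i)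

def upperWindowSum (d : ℕ → ℝ) (n : ℕ) : ℝ := limsup (fun m => windowSum d m n) atTop

lemma windowSum_add (d : ℕ → ℝ) (m a b : ℕ) :
    windowSum d m (a + b) = windowSum d m a + windowSum d (m + a) b := by
  simp only [windowSum, Finset.sum_range_add, add_assoc]

lemma windowSum_neg (d : ℕ → ℝ) (m n : ℕ) : windowSum (-d) m n = -windowSum d m n := by
  simp [windowSum]

section BoundedSequence

variable {d : ℕ → ℝ} {C : ℝ}

lemma abs_windowSum_le (hd : ∀ i, |d i| ≤ C) (m n : ℕ) : |windowSum d m n| ≤ n * C :=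
  (Finset.abs_sum_le_sum_abs _ _).trans <| by
    simpa using Finset.sum_le_sum fun i (_ : i ∈ Finset.range n) => hd (m + i)

lemma isBoundedUnder_le_windowSum (hd : ∀ i, |d i| ≤ C) (k : ℕ → ℕ) (n : ℕ) :
    IsBoundedUnder (· ≤ ·) atTop (fun m => windowSum d (k m) n) :=
  isBoundedUnder_of ⟨n * C, fun m => (abs_le.1 (abs_windowSum_le hd (k m) n)).2⟩

lemma isBoundedUnder_ge_windowSum (hd : ∀ i, |d i| ≤ C) (k : ℕ → ℕ) (n : ℕ) :
    IsBoundedUnder (· ≥ ·) atTop (fun m => windowSum d (k m) n) :=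
  isBoundedUnder_of ⟨-(n * C), fun m => (abs_le.1 (abs_windowSum_le hd (k m) n)).1⟩

lemma upperWindowSum_add_le (hd : ∀ i, |d i| ≤ C) (a b : ℕ) :
    upperWindowSum d (a + b) ≤ upperWindowSum d a + upperWindowSum d b := by
  calc upperWindowSum d (a + b)
      = limsup ((fun m => windowSum d m a) + fun m => windowSum d (m + a) b) atTop := by
        simp only [upperWindowSum, windowSum_add]; rfl
    _ ≤ upperWindowSum d a + limsup (fun m => windowSum d (m + a) b) atTop :=
        limsup_add_le (isBoundedUnder_ge_windowSum hd id a) (isBoundedUnder_le_windowSum hd id a)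
          (isBoundedUnder_ge_windowSum hd (· + a) b).isCoboundedUnder_le
          (isBoundedUnder_le_windowSum hd (· + a) b)
    _ = upperWindowSum d a + upperWindowSum d b := by
        rw [limsup_nat_add (fun m => windowSum d m b) a]; rfl

lemma neg_mul_le_upperWindowSum (hd : ∀ i, |d i| ≤ C) (n : ℕ) :
    -(n * C) ≤ upperWindowSum d n :=
  le_limsup_of_frequently_le
    (Frequently.of_forall fun m => (abs_le.1 (abs_windowSum_le hd m n)).1)
    (isBoundedUnder_le_windowSum hd id n)

lemma exists_tendsto_upperWindowSum_div (hd : ∀ i, |d i| ≤ C) :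
    ∃ L, Tendsto (fun n : ℕ => upperWindowSum d n / n) atTop (nhds L) := by
  have hsub : Subadditive (upperWindowSum d) := upperWindowSum_add_le hd
  refine ⟨hsub.lim, hsub.tendsto_lim ⟨-C, ?_⟩⟩
  rintro _ ⟨n, rfl⟩
  rcases n.eq_zero_or_pos with rfl | hn
  · simpa using (abs_nonneg _).trans (hd 0)
  · rw [le_div_iff₀ (by exact_mod_cast hn)]
    linarith [neg_mul_le_upperWindowSum hd n]

lemma limsup_windowSum_div (hd : ∀ i, |d i| ≤ C) (n : ℕ) :
    limsup (fun m => windowSum d m n / n) atTop = upperWindowSum d n / n :=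
  ((monotone_div_right_of_nonneg n.cast_nonneg).map_limsup_of_continuousAt _
    (continuous_id.div_const _).continuousAt (isBoundedUnder_le_windowSum hd id n)
    (isBoundedUnder_ge_windowSum hd id n).isCoboundedUnder_le).symm

lemma liminf_windowSum_div (hd : ∀ i, |d i| ≤ C) (n : ℕ) :
    liminf (fun m => windowSum d m n / n) atTop = -(upperWindowSum (-d) n / n) := by
  have hd' : ∀ i, |(-d) i| ≤ C := by simpa using hd
  have hanti : Antitone fun y : ℝ => -(y / n) := fun _ _ h =>
    neg_le_neg (div_le_div_of_nonneg_right h n.cast_nonneg)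
  rw [upperWindowSum, hanti.map_limsup_of_continuousAt (fun m => windowSum (-d) m n)
    (continuous_id.div_const _).neg.continuousAt (isBoundedUnder_le_windowSum hd' id n)
    (isBoundedUnder_ge_windowSum hd' id n).isCoboundedUnder_le]
  simp only [Function.comp_def, windowSum_neg, neg_div, neg_neg]

end BoundedSequence

lemma mul_ceil_sub_one_lt_ceil_mul {p : ℕ} (hp : 1 ≤ p) (y : ℝ) :
    p * (⌈y⌉ - 1) < ⌈(p : ℝ) * y⌉ := by
  rw [Int.lt_ceil]
  push_cast
  exact mul_lt_mul_of_pos_left (by linarith [Int.ceil_lt_add_one y]) (by exact_mod_cast hp)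

lemma ceil_mul_le_mul_ceil (p : ℕ) (y : ℝ) : ⌈(p : ℝ) * y⌉ ≤ p * ⌈y⌉ := by
  rw [Int.ceil_le]
  push_cast
  exact mul_le_mul_of_nonneg_left (Int.le_ceil y) p.cast_nonneg

lemma padicDigit_eq (p : ℕ) (x : ℝ) (n : ℕ) :
    padicDigit p x n = ⌈(p : ℝ) * (x * p ^ n)⌉ - 1 - p * (⌈x * p ^ n⌉ - 1) := by
  rw [padicDigit, show x * (p : ℝ) ^ (n + 1) = p * (x * p ^ n) by ring]

lemma padicDigit_nonneg {p : ℕ} (hp : 1 ≤ p) (x : ℝ) (n : ℕ) : 0 ≤ padicDigit p x n := by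
  rw [padicDigit_eq]
  linarith [mul_ceil_sub_one_lt_ceil_mul hp (x * p ^ n)]

lemma padicDigit_le (p : ℕ) (x : ℝ) (n : ℕ) : padicDigit p x n ≤ p - 1 := by
  rw [padicDigit_eq]
  linarith [ceil_mul_le_mul_ceil p (x * p ^ n)]

def digitSeq (p : ℕ) (x : ℝ) (n : ℕ) : ℝ := padicDigit p x n

lemma abs_digitSeq_le {p : ℕ} (hp : 1 ≤ p) (x : ℝ) (n : ℕ) : |digitSeq p x n| ≤ p - 1 := by
  have h₀ : (0 : ℝ) ≤ padicDigit p x n := by exact_mod_cast padicDigit_nonneg hp x n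
  have h₁ : (padicDigit p x n : ℝ) ≤ p - 1 := by exact_mod_cast padicDigit_le p x n
  rw [digitSeq, abs_le]
  exact ⟨by linarith, h₁⟩

lemma msum_eq_windowSum (p : ℕ) (x : ℝ) (m n : ℕ) :
    (msum p x m n : ℝ) = windowSum (digitSeq p x) m n := by
  simp [msum, windowSum, digitSeq]

theorem movingMean_subadditive_general (p : ℕ) (hp : 2 ≤ p) (x : ℝ) :
    (∀ m n : ℕ, 1 ≤ m → 1 ≤ n →
      (-lowerMn p x (m + n)) * ((m : ℝ) + n) ≤
          (-lowerMn p x m) * m - lowerMn p x n * n ∧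
      upperMn p x (m + n) * ((m : ℝ) + n) ≤
          upperMn p x m * m + upperMn p x n * n) ∧
    (∃ L : ℝ, Tendsto (fun n : ℕ => lowerMn p x n) atTop (nhds L)) ∧
    (∃ L : ℝ, Tendsto (fun n : ℕ => upperMn p x n) atTop (nhds L)) := by
  have hd : ∀ i, |digitSeq p x i| ≤ p - 1 := abs_digitSeq_le (by omega) x
  have hd' : ∀ i, |(-digitSeq p x) i| ≤ p - 1 := by simpa using hd
  have hupper (n : ℕ) : upperMn p x n = upperWindowSum (digitSeq p x) n / n := by
    simp only [upperMn, msum_eq_windowSum, limsup_windowSum_div hd]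
  have hlower (n : ℕ) : lowerMn p x n = -(upperWindowSum (-digitSeq p x) n / n) := by
    simp only [lowerMn, msum_eq_windowSum, liminf_windowSum_div hd]
  have hcancel (n : ℕ) (hn : 1 ≤ n) (y : ℝ) : y / n * n = y :=
    div_mul_cancel₀ y (Nat.cast_ne_zero.2 (by omega))
  refine ⟨fun m n hm hn => ⟨?_, ?_⟩, ?_, ?_⟩
  · rw [← Nat.cast_add]
    simp only [hlower, neg_neg, neg_mul, sub_neg_eq_add, hcancel _ hm, hcancel _ hn,
      hcancel _ (hm.trans (m.le_add_right n))]
    exact upperWindowSum_add_le hd' m n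
  · rw [← Nat.cast_add]
    simp only [hupper, hcancel _ hm, hcancel _ hn, hcancel _ (hm.trans (m.le_add_right n))]
    exact upperWindowSum_add_le hd m n
  · obtain ⟨L, hL⟩ := exists_tendsto_upperWindowSum_div hd'
    exact ⟨-L, by simpa only [hlower] using hL.neg⟩
  · obtain ⟨L, hL⟩ := exists_tendsto_upperWindowSum_div hd
    exact ⟨L, by simpa only [hupper] using hL⟩

/-- For an integer `p ≥ 2` and every `x ∈ [0,1]`, the sequences
`n ↦ -M̲ₙ(x)` and `n ↦ M̄ₙ(x)` are subadditive:
`-M̲_{m+n}(x)·(m+n) ≤ -M̲_m(x)·m - M̲_n(x)·n` and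
`M̄_{m+n}(x)·(m+n) ≤ M̄_m(x)·m + M̄_n(x)·n` for all `m, n ≥ 1`; consequently the limits
`lim_{n→∞} M̲ₙ(x)` and `lim_{n→∞} M̄ₙ(x)` exist. -/
theorem movingMean_subadditive (p : ℕ) (hp : 2 ≤ p) (x : ℝ)
    (hx : x ∈ Icc (0 : ℝ) 1) :
    (∀ m n : ℕ, 1 ≤ m → 1 ≤ n →
      (-lowerMn p x (m + n)) * ((m : ℝ) + n) ≤
          (-lowerMn p x m) * m - lowerMn p x n * n ∧
      upperMn p x (m + n) * ((m : ℝ) + n) ≤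
          upperMn p x m * m + upperMn p x n * n) ∧
    (∃ L : ℝ, Tendsto (fun n : ℕ => lowerMn p x n) atTop (nhds L)) ∧
    (∃ L : ℝ, Tendsto (fun n : ℕ => upperMn p x n) atTop (nhds L)) :=
  movingMean_subadditive_general p hp x
end
end
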